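/- arXiv:1906.10800 — 3 statements merged into one kernel-verified Lean document; each statement's English description precedes it below -/
import Mathlib

section
/- Let A and B be n×n complex matrices such that I + B is invertible. Then |det(I + A)| ≤ |det(I + B)| · exp(‖(A − B)(I + B)^{-1}‖₁), where ‖M‖₁ denotes the trace norm of M. -/
/-!
Put `C = (A - B) (1 + B)⁻¹`, so that `1 + A = (1 + C) (1 + B)`; it remains to show
`|det (1 + C)| ≤ exp ‖C‖₁`. If `sᵢ` are the singular values of `1 + C`, then
`|det (1 + C)| = ∏ sᵢ ≤ exp (∑ sᵢ - n)` because `s ≤ exp (s - 1)`. When `1 + C` is invertible,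
`∑ sᵢ = tr (V (1 + C))` for its unitary polar factor `V`, and
`|tr (V (1 + C))| ≤ |tr V| + |tr (V C)| ≤ n + ‖C‖₁`: the entries of a unitary matrix have modulus
at most `1`, and `|tr (V C)| ≤ ‖C‖₁` follows from Cauchy–Schwarz applied column by column after
diagonalising `Cᴴ C`.
-/

open scoped ComplexOrder

/-- The trace norm of a square complex matrix: the trace of the positive semidefinite
square root of `Mᴴ * M`. -/
noncomputable def Matrix.traceNorm {n : ℕ} (M : Matrix (Fin n) (Fin n) ℂ) : ℝ :=
  (((Matrix.posSemidef_conjTranspose_mul_self M).1.eigenvectorUnitary.1 *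
    Matrix.diagonal (((↑) : ℝ → ℂ) ∘ Real.sqrt ∘
      (Matrix.posSemidef_conjTranspose_mul_self M).1.eigenvalues) *
    (star (Matrix.posSemidef_conjTranspose_mul_self M).1.eigenvectorUnitary :
      Matrix (Fin n) (Fin n) ℂ)).trace).re

namespace Matrix

variable {m n 𝕜 : Type*} [Fintype m] [RCLike 𝕜]

theorem conjTranspose_mul_apply_eq_inner (X Y : Matrix m n 𝕜) (i j : n) :
    (Xᴴ * Y) i j = inner 𝕜 (WithLp.toLp 2 fun k => X k i) (WithLp.toLp 2 fun k => Y k j) := by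
  rw [EuclideanSpace.inner_toLp_toLp, dotProduct_comm, mul_apply]
  rfl

theorem norm_conjTranspose_mul_apply_le (X Y : Matrix m n 𝕜) (i j : n) :
    ‖(Xᴴ * Y) i j‖ ≤ √(RCLike.re ((Xᴴ * X) i i)) * √(RCLike.re ((Yᴴ * Y) j j)) := by
  simp only [conjTranspose_mul_apply_eq_inner, ← norm_eq_sqrt_re_inner]
  exact norm_inner_le_norm _ _

variable [Fintype n] [DecidableEq n]

noncomputable abbrev rightSingularUnitary (M : Matrix m n 𝕜) : unitaryGroup n 𝕜 :=
  (posSemidef_conjTranspose_mul_self M).1.eigenvectorUnitary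

noncomputable def singularValues (M : Matrix m n 𝕜) (i : n) : ℝ :=
  √((posSemidef_conjTranspose_mul_self M).1.eigenvalues i)

theorem singularValues_nonneg (M : Matrix m n 𝕜) (i : n) : 0 ≤ M.singularValues i :=
  Real.sqrt_nonneg _

theorem singularValues_sq (M : Matrix m n 𝕜) (i : n) :
    M.singularValues i ^ 2 = (posSemidef_conjTranspose_mul_self M).1.eigenvalues i :=
  Real.sq_sqrt ((posSemidef_conjTranspose_mul_self M).eigenvalues_nonneg i)

theorem star_rightSingularUnitary_mul_conjTranspose_mul_self_mul (M : Matrix m n 𝕜) :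
    star (M.rightSingularUnitary : Matrix n n 𝕜) * (Mᴴ * M) *
      (M.rightSingularUnitary : Matrix n n 𝕜) = diagonal fun i => (M.singularValues i : 𝕜) ^ 2 := by
  have h := (posSemidef_conjTranspose_mul_self M).1.conjStarAlgAut_star_eigenvectorUnitary
  rw [Unitary.conjStarAlgAut_star_apply] at h
  rw [h]
  congr 1
  funext i
  simp [← RCLike.ofReal_pow, singularValues_sq]

theorem norm_trace_mul_le_sum_singularValues {V : Matrix n n 𝕜} (hV : V ∈ unitaryGroup n 𝕜)
    (M : Matrix n n 𝕜) : ‖(V * M).trace‖ ≤ ∑ i, M.singularValues i := by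
  set U : Matrix n n 𝕜 := (M.rightSingularUnitary : Matrix n n 𝕜)
  have hU : U * star U = 1 := Unitary.coe_mul_star_self _
  have hU' : star U * U = 1 := Unitary.coe_star_mul_self _
  have htrace : (V * M).trace = ((Vᴴ * U)ᴴ * (M * U)).trace := by
    rw [show (Vᴴ * U)ᴴ * (M * U) = star U * (V * M) * U by
        simp [conjTranspose_mul, star_eq_conjTranspose, mul_assoc],
      trace_mul_cycle, hU, one_mul]
  have hX : (Vᴴ * U)ᴴ * (Vᴴ * U) = 1 := by
    rw [conjTranspose_mul, conjTranspose_conjTranspose, ← star_eq_conjTranspose,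
      ← star_eq_conjTranspose, mul_assoc, ← mul_assoc V, mem_unitaryGroup_iff.mp hV, one_mul, hU']
  have hY : (M * U)ᴴ * (M * U) = diagonal fun i => (M.singularValues i : 𝕜) ^ 2 := by
    rw [← star_rightSingularUnitary_mul_conjTranspose_mul_self_mul, conjTranspose_mul,
      star_eq_conjTranspose, mul_assoc, mul_assoc, mul_assoc]
  calc ‖(V * M).trace‖ ≤ ∑ i, ‖((Vᴴ * U)ᴴ * (M * U)) i i‖ := htrace ▸ norm_sum_le _ _
    _ ≤ ∑ i, M.singularValues i := Finset.sum_le_sum fun i _ => by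
      grw [norm_conjTranspose_mul_apply_le, hX, hY]
      rw [one_apply_eq, diagonal_apply_eq, ← RCLike.ofReal_pow, RCLike.one_re, RCLike.ofReal_re,
        Real.sqrt_one, one_mul, Real.sqrt_sq (M.singularValues_nonneg i)]

theorem norm_det_eq_prod_singularValues (M : Matrix n n 𝕜) :
    ‖M.det‖ = ∏ i, M.singularValues i := by
  have hsq : ‖M.det‖ ^ 2 = ∏ i, (posSemidef_conjTranspose_mul_self M).1.eigenvalues i := by
    apply RCLike.ofReal_injective (K := 𝕜)
    rw [RCLike.ofReal_prod, ← (posSemidef_conjTranspose_mul_self M).1.det_eq_prod_eigenvalues,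
      det_mul, det_conjTranspose, RCLike.star_def, RCLike.conj_mul, RCLike.ofReal_pow]
  rw [← Real.sqrt_sq (norm_nonneg _), hsq, Real.sqrt_prod _ fun i _ =>
    (posSemidef_conjTranspose_mul_self M).eigenvalues_nonneg i]
  rfl

theorem norm_det_le_exp_sum_singularValues_sub_card (M : Matrix n n 𝕜) :
    ‖M.det‖ ≤ Real.exp (∑ i, M.singularValues i - Fintype.card n) := by
  calc ‖M.det‖ = ∏ i, M.singularValues i := norm_det_eq_prod_singularValues M
    _ ≤ ∏ i, Real.exp (M.singularValues i - 1) :=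
      Finset.prod_le_prod (fun i _ => M.singularValues_nonneg i)
        fun i _ => by linarith [Real.add_one_le_exp (M.singularValues i - 1)]
    _ = Real.exp (∑ i, M.singularValues i - Fintype.card n) := by
      rw [← Real.exp_sum, Finset.sum_sub_distrib, Finset.sum_const, Finset.card_univ,
        nsmul_one]

theorem singularValues_ne_zero {M : Matrix n n 𝕜} (hM : M.det ≠ 0) (i : n) :
    M.singularValues i ≠ 0 := by
  rw [← norm_ne_zero_iff, norm_det_eq_prod_singularValues, Finset.prod_ne_zero_iff] at hM
  exact hM i (Finset.mem_univ i)

/-- The witness is the unitary polar factor `|M|⁻¹ Mᴴ` of `M`, where `|M| = √(Mᴴ M)`. -/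
theorem exists_mem_unitaryGroup_trace_mul_eq_sum_singularValues {M : Matrix n n 𝕜}
    (hM : M.det ≠ 0) :
    ∃ V ∈ unitaryGroup n 𝕜, (V * M).trace = ∑ i, (M.singularValues i : 𝕜) := by
  set U : Matrix n n 𝕜 := (M.rightSingularUnitary : Matrix n n 𝕜)
  set D : Matrix n n 𝕜 := diagonal fun i => (M.singularValues i : 𝕜)⁻¹
  have hΛ := star_rightSingularUnitary_mul_conjTranspose_mul_self_mul M
  have hs i : (M.singularValues i : 𝕜) ≠ 0 :=
    RCLike.ofReal_ne_zero.mpr (singularValues_ne_zero hM i)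
  have hDΛD : D * (diagonal fun i => (M.singularValues i : 𝕜) ^ 2) * D = 1 := by
    rw [diagonal_mul_diagonal, diagonal_mul_diagonal, ← diagonal_one]
    congr 1
    funext i
    field_simp [hs i]
  have hD : Dᴴ = D := by
    simp [D, diagonal_conjTranspose]
  refine ⟨U * D * star U * Mᴴ, mem_unitaryGroup_iff.mpr ?_, ?_⟩
  · calc
      _ = U * (D * (star U * (Mᴴ * M) * U) * D) * star U := by
        simp only [star_eq_conjTranspose, conjTranspose_mul, conjTranspose_conjTranspose, hD,
          mul_assoc]
      _ = 1 := by
        rw [hΛ, hDΛD, mul_one]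
        exact Unitary.coe_mul_star_self _
  · calc
      _ = (D * (star U * (Mᴴ * M) * U)).trace := by
        rw [show U * D * star U * Mᴴ * M = U * (D * star U * (Mᴴ * M)) by simp only [mul_assoc],
          trace_mul_comm]
        simp only [mul_assoc]
      _ = ∑ i, (M.singularValues i : 𝕜) := by
        rw [hΛ, diagonal_mul_diagonal, trace_diagonal]
        refine Finset.sum_congr rfl fun i _ => ?_
        field_simp [hs i]

theorem norm_trace_le_card_of_mem_unitaryGroup {V : Matrix n n 𝕜} (hV : V ∈ unitaryGroup n 𝕜) :
    ‖V.trace‖ ≤ Fintype.card n :=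
  calc ‖V.trace‖ ≤ ∑ i, ‖V i i‖ := norm_sum_le _ _
    _ ≤ ∑ _i : n, (1 : ℝ) := Finset.sum_le_sum fun i _ => entry_norm_bound_of_unitary hV i i
    _ = Fintype.card n := by simp

theorem sum_singularValues_one_add_le {C : Matrix n n 𝕜} (hC : (1 + C).det ≠ 0) :
    ∑ i, (1 + C).singularValues i ≤ Fintype.card n + ∑ i, C.singularValues i := by
  obtain ⟨V, hV, htrace⟩ := exists_mem_unitaryGroup_trace_mul_eq_sum_singularValues hC
  calc ∑ i, (1 + C).singularValues i = RCLike.re (V * (1 + C)).trace := by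
        rw [htrace, ← RCLike.ofReal_sum, RCLike.ofReal_re]
    _ = RCLike.re V.trace + RCLike.re (V * C).trace := by
        rw [mul_add, mul_one, trace_add, map_add]
    _ ≤ ‖V.trace‖ + ‖(V * C).trace‖ := add_le_add (RCLike.re_le_norm _) (RCLike.re_le_norm _)
    _ ≤ Fintype.card n + ∑ i, C.singularValues i :=
        add_le_add (norm_trace_le_card_of_mem_unitaryGroup hV)
          (norm_trace_mul_le_sum_singularValues hV C)

theorem norm_det_one_add_le_exp_sum_singularValues (C : Matrix n n 𝕜) :
    ‖(1 + C).det‖ ≤ Real.exp (∑ i, C.singularValues i) := by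
  by_cases hC : (1 + C).det = 0
  · rw [hC, norm_zero]
    exact (Real.exp_pos _).le
  · grw [norm_det_le_exp_sum_singularValues_sub_card, sum_singularValues_one_add_le hC]
    simp

end Matrix

theorem Matrix.traceNorm_eq_sum_singularValues {n : ℕ} (M : Matrix (Fin n) (Fin n) ℂ) :
    M.traceNorm = ∑ i, M.singularValues i := by
  rw [traceNorm, trace_mul_cycle, Unitary.coe_star_mul_self, one_mul, trace_diagonal,
    Complex.re_sum]
  rfl

/-- If `I + B` is invertible, then
`|det (I + A)| ≤ |det (I + B)| · exp ‖(A - B) (I + B)⁻¹‖₁`,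
where `‖·‖₁` is the trace norm. -/
theorem abs_det_one_add_le {n : ℕ} (A B : Matrix (Fin n) (Fin n) ℂ)
    (hB : IsUnit (1 + B)) :
    ‖(1 + A).det‖ ≤
      ‖(1 + B).det‖ * Real.exp (((A - B) * (1 + B)⁻¹).traceNorm) := by
  have hfactor : 1 + A = (1 + (A - B) * (1 + B)⁻¹) * (1 + B) := by
    rw [add_mul, one_mul, mul_assoc,
      Matrix.nonsing_inv_mul _ ((1 + B).isUnit_iff_isUnit_det.mp hB), mul_one]
    abel
  rw [hfactor, Matrix.det_mul, norm_mul, mul_comm, Matrix.traceNorm_eq_sum_singularValues]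
  gcongr
  exact Matrix.norm_det_one_add_le_exp_sum_singularValues _
end

section
/- Let A and B be n×n complex matrices such that I + B is invertible. Then |det(I + B)| ≥ |det(I + A)| · exp(−∑_{i,j} |((A − B)(I + B)^{-1})_{ij}|), where the sum runs over all entries of the matrix (A − B)(I + B)^{-1}. -/
/-!
Writing `C = (A - B)(I + B)⁻¹` gives the factorization `I + A = (I + C)(I + B)`, so it
suffices to show `|det (I + C)| ≤ exp (∑ |C_ij|)`. Expanding the determinant over permutations
and enlarging the sum to all maps `n → n` bounds `|det M|` by the product of the column sums
`∑ᵢ |M_ij|`; for `M = I + C` each column sum is at most `1 + ∑ᵢ |C_ij| ≤ exp (∑ᵢ |C_ij|)`.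
-/

open Finset

namespace Matrix

variable {n R : Type*} [Fintype n] [DecidableEq n]

theorem norm_det_le_prod_sum_norm_col [NormedCommRing R] [NormOneClass R] (M : Matrix n n R) :
    ‖M.det‖ ≤ ∏ j, ∑ i, ‖M i j‖ := by
  let toFun : Equiv.Perm n ↪ (n → n) := ⟨DFunLike.coe, DFunLike.coe_injective⟩
  calc ‖M.det‖ ≤ ∑ σ : Equiv.Perm n, ‖∏ j, M (σ j) j‖ := by
        rw [det_apply]
        refine (norm_sum_le _ _).trans_eq (sum_congr rfl fun σ _ => ?_)
        exact norm_units_zsmul _ _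
    _ ≤ ∑ σ : Equiv.Perm n, ∏ j, ‖M (σ j) j‖ := sum_le_sum fun σ _ => norm_prod_le _ _
    _ = ∑ f ∈ univ.map toFun, ∏ j, ‖M (f j) j‖ :=
        (sum_map univ toFun fun f => ∏ j, ‖M (f j) j‖).symm
    _ ≤ ∑ f : n → n, ∏ j, ‖M (f j) j‖ :=
        sum_le_univ_sum_of_nonneg fun f => prod_nonneg fun j _ => norm_nonneg _
    _ = ∏ j, ∑ i, ‖M i j‖ := (Fintype.prod_sum fun j i => ‖M i j‖).symm

theorem sum_norm_one_add_col_le [SeminormedRing R] [NormOneClass R] (C : Matrix n n R) (j : n) :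
    ∑ i, ‖(1 + C) i j‖ ≤ 1 + ∑ i, ‖C i j‖ := by
  have h_one : ∑ i, ‖(1 : Matrix n n R) i j‖ = 1 := by
    simp [one_apply, apply_ite]
  calc ∑ i, ‖(1 + C) i j‖ ≤ ∑ i, (‖(1 : Matrix n n R) i j‖ + ‖C i j‖) :=
        sum_le_sum fun i _ => norm_add_le _ _
    _ = 1 + ∑ i, ‖C i j‖ := by rw [sum_add_distrib, h_one]

theorem norm_det_one_add_le_exp [NormedCommRing R] [NormOneClass R] (C : Matrix n n R) :
    ‖(1 + C).det‖ ≤ Real.exp (∑ i, ∑ j, ‖C i j‖) := by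
  rw [sum_comm, Real.exp_sum]
  refine (norm_det_le_prod_sum_norm_col _).trans
    (prod_le_prod (fun j _ => by positivity) fun j _ => ?_)
  exact (sum_norm_one_add_col_le C j).trans (by linarith [Real.add_one_le_exp (∑ i, ‖C i j‖)])

theorem one_add_mul_inv_one_add [CommRing R] {A B : Matrix n n R} (hB : IsUnit (1 + B)) :
    (1 + (A - B) * (1 + B)⁻¹) * (1 + B) = 1 + A := by
  have h_inv : (1 + B)⁻¹ * (1 + B) = 1 := nonsing_inv_mul _ ((isUnit_iff_isUnit_det _).mp hB)
  rw [add_mul, one_mul, mul_assoc, h_inv, mul_one]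
  abel

end Matrix

/-- If `I + B` is invertible, then
`|det (I + B)| ≥ |det (I + A)| · exp (-∑_{i,j} |((A - B) (I + B)⁻¹)_{ij}|)`. -/
theorem abs_det_one_add_ge {n : ℕ} (A B : Matrix (Fin n) (Fin n) ℂ)
    (hB : IsUnit (1 + B)) :
    ‖(1 + A).det‖ *
        Real.exp (-(∑ i : Fin n, ∑ j : Fin n, ‖((A - B) * (1 + B)⁻¹) i j‖)) ≤
      ‖(1 + B).det‖ := by
  set C := (A - B) * (1 + B)⁻¹
  have h_factor : (1 + A).det = (1 + C).det * (1 + B).det := by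
    rw [← Matrix.det_mul, Matrix.one_add_mul_inv_one_add hB]
  rw [Real.exp_neg, ← div_eq_mul_inv, div_le_iff₀ (Real.exp_pos _), h_factor, norm_mul,
    mul_comm]
  gcongr
  exact Matrix.norm_det_one_add_le_exp C
end

section
/- Let d ≥ 1, η > 0, ν > 0, and let F : ℂ → ℂ be holomorphic on the open strip {z : |Im z| < η}, continuous and bounded on the closed strip, with ‖F‖_∞ := sup_{|Im z| ≤ η} |F(z)|, and real-valued on ℝ. Let Λ ⊂ ℤ^d be a finite set, let H₀ be a Hermitian Λ×Λ complex matrix satisfying ∑_{n ∈ Λ} |H₀(m,n)| (e^{ν|m−n|} − 1) < η/2 for every m ∈ Λ, let λ ∈ ℝ, and let ω : Λ → ℝ be arbitrary. If |g| < η (1 − e^{−ν})^d / (72√2 ‖F‖_∞), then there exists a unique V : Λ → ℝ such that V(n) = (F(H₀ + λ·diag(ω) + g·diag(V)))(n,n) for every n ∈ Λ. -/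
/-!
By the Cauchy estimate on discs of radius `η` centred on the real axis, `x ↦ Re F x` is
Lipschitz on `ℝ` with constant `K = ‖F‖_∞ / η`. Functional calculus by a `K`-Lipschitz function
is `K`-Lipschitz on Hermitian matrices in the Frobenius norm: in eigenbases `U`, `W` of `A`, `B`
the entries of `f A - f B` are `(f aᵢ - f bⱼ) (U⋆W)ᵢⱼ`. Taking the (real parts of the) diagonal
does not increase that norm. Hence `V ↦ Re diag F(X + g diag V)` is a contraction of
`ℓ²(Λ)` with constant `K |g| < 1`, and the Banach fixed point theorem applies.
-/

/-- The ℓ¹ norm `|n| = |n₁| + … + |n_d|` on `ℤ^d`. -/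
def znorm {d : ℕ} (x : Fin d → ℤ) : ℝ := ∑ i, |(x i : ℝ)|

section Strip

variable {F : ℂ → ℂ} {η M : ℝ}

theorem norm_deriv_ofReal_le_of_strip (hη : 0 < η)
    (hF_holo : DifferentiableOn ℂ F {z : ℂ | |z.im| < η})
    (hF_cont : ContinuousOn F {z : ℂ | |z.im| ≤ η})
    (hM : ∀ z : ℂ, |z.im| ≤ η → ‖F z‖ ≤ M) (x : ℝ) : ‖deriv F x‖ ≤ M / η := by
  have him : ∀ u : ℂ, |u.im| ≤ dist u x := fun u => by
    simpa [Complex.dist_eq] using Complex.abs_im_le_norm (u - x)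
  have hclosed : Metric.closedBall (x : ℂ) η ⊆ {z : ℂ | |z.im| ≤ η} :=
    fun u hu => (him u).trans hu
  refine Complex.norm_deriv_le_of_forall_mem_sphere_norm_le hη
    ⟨hF_holo.mono fun u hu => (him u).trans_lt hu,
      hF_cont.mono (Metric.closure_ball_subset_closedBall.trans hclosed)⟩
    fun u hu => hM u (hclosed (Metric.sphere_subset_closedBall hu))

theorem lipschitzWith_re_comp_ofReal_of_strip (hη : 0 < η)
    (hF_holo : DifferentiableOn ℂ F {z : ℂ | |z.im| < η})
    (hF_cont : ContinuousOn F {z : ℂ | |z.im| ≤ η})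
    (hM : ∀ z : ℂ, |z.im| ≤ η → ‖F z‖ ≤ M) :
    LipschitzWith (M / η).toNNReal (fun x : ℝ => (F x).re) := by
  have hopen : IsOpen {z : ℂ | |z.im| < η} :=
    isOpen_lt (continuous_abs.comp Complex.continuous_im) continuous_const
  have hderiv : ∀ x : ℝ, HasDerivAt (fun y : ℝ => F y) (deriv F x) x := fun x =>
    (hF_holo.differentiableAt (hopen.mem_nhds (by simpa using hη))).hasDerivAt.comp_ofReal
  have hlip : LipschitzWith (M / η).toNNReal (fun x : ℝ => F x) :=
    lipschitzWith_of_nnnorm_deriv_le (fun x => (hderiv x).differentiableAt) fun x => by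
      rw [(hderiv x).deriv, ← NNReal.coe_le_coe, coe_nnnorm]
      exact (norm_deriv_ofReal_le_of_strip hη hF_holo hF_cont hM x).trans
        (Real.le_coe_toNNReal _)
  simpa [Function.comp_def] using (RCLike.lipschitzWith_re (K := ℂ)).comp hlip

end Strip

namespace Matrix

attribute [local instance] frobeniusNormedAddCommGroup

variable {𝕜 m n : Type*} [RCLike 𝕜]

theorem IsHermitian.add_smul_diagonal_ofReal [DecidableEq n] {X : Matrix n n 𝕜}
    (hX : X.IsHermitian) (c : ℝ) (v : n → ℝ) :
    (X + (c : 𝕜) • diagonal (fun k => (v k : 𝕜))).IsHermitian :=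
  hX.add ((isHermitian_diagonal_iff.mpr fun k => RCLike.conj_ofReal (v k)).smul
    (RCLike.conj_ofReal c))

variable [Fintype m] [Fintype n]

theorem frobenius_norm_sq (A : Matrix m n 𝕜) : ‖A‖ ^ 2 = ∑ i, ∑ j, ‖A i j‖ ^ 2 := by
  rw [frobenius_norm_def, ← Real.sqrt_eq_rpow]
  simp_rw [Real.rpow_two]
  exact Real.sq_sqrt (by positivity)

theorem frobenius_norm_sq_eq_trace (A : Matrix m n 𝕜) :
    ((‖A‖ ^ 2 : ℝ) : 𝕜) = trace (Aᴴ * A) := by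
  simp only [frobenius_norm_sq, trace, diag_apply, mul_apply, conjTranspose_apply,
    RCLike.star_def, RCLike.conj_mul]
  push_cast
  exact Finset.sum_comm

theorem frobenius_norm_unitary_mul [DecidableEq m] {U : Matrix m m 𝕜}
    (hU : U ∈ unitaryGroup m 𝕜) (A : Matrix m n 𝕜) : ‖U * A‖ = ‖A‖ := by
  have h : ((‖U * A‖ ^ 2 : ℝ) : 𝕜) = ((‖A‖ ^ 2 : ℝ) : 𝕜) := by
    rw [frobenius_norm_sq_eq_trace, frobenius_norm_sq_eq_trace, conjTranspose_mul,
      Matrix.mul_assoc, ← Matrix.mul_assoc Uᴴ, ← star_eq_conjTranspose,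
      (mem_unitaryGroup_iff').mp hU, Matrix.one_mul]
  exact (pow_left_inj₀ (norm_nonneg _) (norm_nonneg _) two_ne_zero).mp
    (RCLike.ofReal_injective h)

theorem frobenius_norm_mul_unitary [DecidableEq n] {U : Matrix n n 𝕜}
    (hU : U ∈ unitaryGroup n 𝕜) (A : Matrix m n 𝕜) : ‖A * U‖ = ‖A‖ := by
  rw [← frobenius_norm_conjTranspose, conjTranspose_mul, ← star_eq_conjTranspose U,
    frobenius_norm_unitary_mul (Unitary.star_mem hU), frobenius_norm_conjTranspose]

theorem frobenius_norm_diagonal_ofReal [DecidableEq n] (v : n → ℝ) :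
    ‖diagonal (fun k => (v k : 𝕜))‖ = ‖WithLp.toLp 2 v‖ := by
  simp only [frobenius_norm_diagonal, EuclideanSpace.norm_eq, RCLike.norm_ofReal,
    Real.norm_eq_abs]

theorem norm_toLp_re_diag_le (M : Matrix n n 𝕜) :
    ‖WithLp.toLp 2 (fun i => RCLike.re (M i i))‖ ≤ ‖M‖ := by
  rw [← pow_le_pow_iff_left₀ (norm_nonneg _) (norm_nonneg _) two_ne_zero,
    EuclideanSpace.norm_sq_eq, frobenius_norm_sq]
  refine Finset.sum_le_sum fun i _ => ?_
  calc ‖RCLike.re (M i i)‖ ^ 2 ≤ ‖M i i‖ ^ 2 := by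
        gcongr
        exact (Real.norm_eq_abs _).trans_le (RCLike.abs_re_le_norm _)
    _ ≤ ∑ j, ‖M i j‖ ^ 2 :=
        Finset.single_le_sum (f := fun j => ‖M i j‖ ^ 2) (fun j _ => sq_nonneg _)
          (Finset.mem_univ i)

theorem star_mul_conj_sub_conj_mul [DecidableEq n] {U W : Matrix n n 𝕜}
    (hU : U ∈ unitaryGroup n 𝕜) (hW : W ∈ unitaryGroup n 𝕜) (D E : Matrix n n 𝕜) :
    star U * (U * D * star U - W * E * star W) * W = D * (star U * W) - (star U * W) * E := by
  simp only [Matrix.mul_sub, Matrix.sub_mul, ← Matrix.mul_assoc, (mem_unitaryGroup_iff').mp hU,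
    Matrix.one_mul]
  simp only [Matrix.mul_assoc, (mem_unitaryGroup_iff').mp hW, Matrix.mul_one]

theorem frobenius_norm_sq_diagonal_mul_sub_mul_diagonal [DecidableEq n] (a b : n → ℝ)
    (M : Matrix n n 𝕜) :
    ‖diagonal (fun i => (a i : 𝕜)) * M - M * diagonal (fun j => (b j : 𝕜))‖ ^ 2
      = ∑ i, ∑ j, (a i - b j) ^ 2 * ‖M i j‖ ^ 2 := by
  simp only [frobenius_norm_sq, Matrix.sub_apply, diagonal_mul, mul_diagonal]
  refine Finset.sum_congr rfl fun i _ => Finset.sum_congr rfl fun j _ => ?_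
  rw [mul_comm (M i j), ← sub_mul, ← RCLike.ofReal_sub, norm_mul, RCLike.norm_ofReal, mul_pow,
    sq_abs]

theorem IsHermitian.frobenius_norm_sq_cfc_sub_cfc [DecidableEq n] {A B : Matrix n n 𝕜}
    (hA : A.IsHermitian) (hB : B.IsHermitian) (f : ℝ → ℝ) :
    ‖cfc f A - cfc f B‖ ^ 2 = ∑ i, ∑ j, (f (hA.eigenvalues i) - f (hB.eigenvalues j)) ^ 2 *
      ‖(star (hA.eigenvectorUnitary : Matrix n n 𝕜) * hB.eigenvectorUnitary) i j‖ ^ 2 := by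
  have hU := hA.eigenvectorUnitary.2
  have hW := hB.eigenvectorUnitary.2
  rw [← frobenius_norm_unitary_mul (Unitary.star_mem hU), ← frobenius_norm_mul_unitary hW,
    hA.cfc_eq, hB.cfc_eq, IsHermitian.cfc, IsHermitian.cfc, Unitary.conjStarAlgAut_apply,
    Unitary.conjStarAlgAut_apply, star_mul_conj_sub_conj_mul hU hW]
  exact frobenius_norm_sq_diagonal_mul_sub_mul_diagonal _ _ _

theorem IsHermitian.frobenius_norm_cfc_sub_cfc_le [DecidableEq n] {A B : Matrix n n 𝕜}
    (hA : A.IsHermitian) (hB : B.IsHermitian) {f : ℝ → ℝ} {K : NNReal}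
    (hf : LipschitzWith K f) : ‖cfc f A - cfc f B‖ ≤ K * ‖A - B‖ := by
  have hsq : ‖cfc f A - cfc f B‖ ^ 2 ≤ (K * ‖A - B‖) ^ 2 := by
    conv_rhs => rw [mul_pow, ← cfc_id' ℝ A hA.isSelfAdjoint, ← cfc_id' ℝ B hB.isSelfAdjoint,
      hA.frobenius_norm_sq_cfc_sub_cfc hB, Finset.mul_sum]
    rw [hA.frobenius_norm_sq_cfc_sub_cfc hB]
    refine Finset.sum_le_sum fun i _ => ?_
    rw [Finset.mul_sum]
    refine Finset.sum_le_sum fun j _ => ?_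
    have hfij : |f (hA.eigenvalues i) - f (hB.eigenvalues j)|
        ≤ |K * (hA.eigenvalues i - hB.eigenvalues j)| := by
      rw [abs_mul, NNReal.abs_eq]
      exact hf.dist_le_mul _ _
    calc _ ≤ (K * (hA.eigenvalues i - hB.eigenvalues j)) ^ 2 * _ :=
          mul_le_mul_of_nonneg_right (sq_le_sq.mpr hfij) (sq_nonneg _)
      _ = _ := by ring
  exact (pow_le_pow_iff_left₀ (norm_nonneg _) (by positivity) two_ne_zero).mp hsq

theorem IsHermitian.existsUnique_eq_cfc_add_smul_diagonal_apply_self [DecidableEq n]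
    {X : Matrix n n 𝕜} (hX : X.IsHermitian) {f : ℝ → ℝ} {K : NNReal} (hf : LipschitzWith K f)
    {g : ℝ} (hKg : K * ‖g‖₊ < 1) :
    ∃! V : n → ℝ, ∀ i, (V i : 𝕜) = cfc f (X + (g : 𝕜) • diagonal (fun k => (V k : 𝕜))) i i := by
  set A : (n → ℝ) → Matrix n n 𝕜 := fun V => X + (g : 𝕜) • diagonal (fun k => (V k : 𝕜))
  have hA : ∀ V, (A V).IsHermitian := hX.add_smul_diagonal_ofReal g
  set Φ : EuclideanSpace ℝ n → EuclideanSpace ℝ n :=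
    fun V => WithLp.toLp 2 fun i => RCLike.re (cfc f (A V.ofLp) i i)
  have hΦ : ContractingWith (K * ‖g‖₊) Φ := by
    refine ⟨hKg, LipschitzWith.of_dist_le_mul fun V W => ?_⟩
    have hAVW : A V.ofLp - A W.ofLp = diagonal (fun k => ((g * (V - W) k : ℝ) : 𝕜)) := by
      simp only [A, add_sub_add_left_eq_sub, diagonal_sub, ← diagonal_smul]
      congr 1
      ext k
      push_cast [Pi.smul_apply, PiLp.sub_apply, smul_eq_mul]
      ring
    calc dist (Φ V) (Φ W)
        = ‖WithLp.toLp 2 fun i => RCLike.re ((cfc f (A V.ofLp) - cfc f (A W.ofLp)) i i)‖ := by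
          rw [dist_eq_norm]
          congr 1
          ext i
          simp [Φ]
      _ ≤ ‖cfc f (A V.ofLp) - cfc f (A W.ofLp)‖ := norm_toLp_re_diag_le _
      _ ≤ K * ‖A V.ofLp - A W.ofLp‖ := (hA _).frobenius_norm_cfc_sub_cfc_le (hA _) hf
      _ = K * ‖g‖₊ * dist V W := by
          have : WithLp.toLp 2 (fun k => g * (V - W) k) = g • (V - W) := rfl
          rw [hAVW, frobenius_norm_diagonal_ofReal, this, norm_smul, dist_eq_norm, mul_assoc,
            coe_nnnorm]
  have hfixed : ∀ V : n → ℝ,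
      (∀ i, (V i : 𝕜) = cfc f (A V) i i) ↔ Function.IsFixedPt Φ (WithLp.toLp 2 V) := by
    intro V
    have hdiag : ∀ i, (RCLike.re (cfc f (A V) i i) : 𝕜) = cfc f (A V) i i := fun i =>
      congrFun (IsHermitian.coe_re_diag (cfc_predicate f (A V))) i
    simp only [Function.IsFixedPt, Φ, (WithLp.toLp_injective 2).eq_iff, funext_iff]
    refine forall_congr' fun i => ?_
    nth_rw 1 [← hdiag i]
    rw [RCLike.ofReal_inj, eq_comm]
  have : Nonempty (EuclideanSpace ℝ n) := ⟨0⟩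
  refine ⟨(ContractingWith.fixedPoint Φ hΦ).ofLp, (hfixed _).mpr hΦ.fixedPoint_isFixedPt,
    fun V hV => ?_⟩
  exact congrArg WithLp.ofLp (hΦ.fixedPoint_unique ((hfixed V).mp hV))

end Matrix

theorem effective_potential_exists_unique_general
    (d : ℕ) (η ν lam g : ℝ) (hη : 0 < η) (hν : 0 < ν)
    (F : ℂ → ℂ)
    (hF_holo : DifferentiableOn ℂ F {z : ℂ | |z.im| < η})
    (hF_cont : ContinuousOn F {z : ℂ | |z.im| ≤ η})
    (hF_bdd : ∃ M : ℝ, ∀ z : ℂ, |z.im| ≤ η → ‖F z‖ ≤ M)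
    (Λ : Finset (Fin d → ℤ))
    (H₀ : Matrix Λ Λ ℂ) (hH₀ : H₀.IsHermitian)
    (ω : Λ → ℝ)
    (hg : |g| < η * (1 - Real.exp (-ν)) ^ d /
      (72 * Real.sqrt 2 * (⨆ z : {z : ℂ // |z.im| ≤ η}, ‖F z‖))) :
    ∃! V : Λ → ℝ, ∀ n : Λ,
      (V n : ℂ) =
        cfc (fun x : ℝ => (F (x : ℂ)).re)
          (H₀ + (lam : ℂ) • Matrix.diagonal (fun k : Λ => (ω k : ℂ))
            + (g : ℂ) • Matrix.diagonal (fun k : Λ => (V k : ℂ))) n n := by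
  set M := ⨆ z : {z : ℂ // |z.im| ≤ η}, ‖F z‖
  have hFM : ∀ z : ℂ, |z.im| ≤ η → ‖F z‖ ≤ M := by
    obtain ⟨C, hC⟩ := hF_bdd
    exact fun z hz => le_ciSup (f := fun z : {z : ℂ // |z.im| ≤ η} => ‖F z‖)
      ⟨C, Set.forall_mem_range.mpr fun z => hC z z.2⟩ ⟨z, hz⟩
  have hM : 0 < M := by
    refine ((norm_nonneg _).trans (hFM 0 (by simpa using hη.le))).lt_of_ne' ?_
    intro hM0
    simp only [hM0, mul_zero, div_zero] at hg
    exact (abs_nonneg g).not_gt hg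
  have hgM : |g| * M < η :=
    calc |g| * M ≤ |g| * (72 * Real.sqrt 2 * M) := by
          gcongr
          exact le_mul_of_one_le_left hM.le (by nlinarith [Real.one_lt_sqrt_two])
      _ < η * (1 - Real.exp (-ν)) ^ d := (lt_div_iff₀ (by positivity)).mp hg
      _ ≤ η := mul_le_of_le_one_right hη.le
          (pow_le_one₀ (sub_nonneg.mpr (Real.exp_le_one_iff.mpr (by linarith)))
            (sub_le_self _ (Real.exp_pos _).le))
  have hKg : (M / η).toNNReal * ‖g‖₊ < 1 := by
    rw [← NNReal.coe_lt_coe, NNReal.coe_mul, Real.coe_toNNReal _ (by positivity), coe_nnnorm,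
      Real.norm_eq_abs, NNReal.coe_one, div_mul_eq_mul_div, div_lt_one hη]
    linarith
  exact (hH₀.add_smul_diagonal_ofReal lam ω).existsUnique_eq_cfc_add_smul_diagonal_apply_self
    (lipschitzWith_re_comp_ofReal_of_strip hη hF_holo hF_cont hFM) hKg

/-- Existence and uniqueness of the self-consistent effective potential on a finite set
`Λ ⊂ ℤ^d`: if `|g| < η (1 - e^{-ν})^d / (72 √2 ‖F‖_∞)`, there is a unique `V : Λ → ℝ`
with `V n = (F(H₀ + λ diag ω + g diag V))(n,n)` for all `n ∈ Λ`. -/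
theorem effective_potential_exists_unique
    (d : ℕ) (hd : 1 ≤ d) (η ν lam g : ℝ) (hη : 0 < η) (hν : 0 < ν)
    (F : ℂ → ℂ)
    (hF_holo : DifferentiableOn ℂ F {z : ℂ | |z.im| < η})
    (hF_cont : ContinuousOn F {z : ℂ | |z.im| ≤ η})
    (hF_bdd : ∃ M : ℝ, ∀ z : ℂ, |z.im| ≤ η → ‖F z‖ ≤ M)
    (hF_real : ∀ x : ℝ, (F (x : ℂ)).im = 0)
    (Λ : Finset (Fin d → ℤ))
    (H₀ : Matrix Λ Λ ℂ) (hH₀ : H₀.IsHermitian)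
    (hdecay : ∀ m : Λ, ∑ n : Λ,
      ‖H₀ m n‖ * (Real.exp (ν * znorm ((m : Fin d → ℤ) - (n : Fin d → ℤ))) - 1)
        < η / 2)
    (ω : Λ → ℝ)
    (hg : |g| < η * (1 - Real.exp (-ν)) ^ d /
      (72 * Real.sqrt 2 * (⨆ z : {z : ℂ // |z.im| ≤ η}, ‖F z‖))) :
    ∃! V : Λ → ℝ, ∀ n : Λ,
      (V n : ℂ) =
        cfc (fun x : ℝ => (F (x : ℂ)).re)
          (H₀ + (lam : ℂ) • Matrix.diagonal (fun k : Λ => (ω k : ℂ))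
            + (g : ℂ) • Matrix.diagonal (fun k : Λ => (V k : ℂ))) n n :=
  effective_potential_exists_unique_general d η ν lam g hη hν F hF_holo hF_cont hF_bdd Λ H₀ hH₀ ω hg
end
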